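/- Theorem 2 (unitary implemented by MBQC by unit cells): let T be a unitary on N qubits with T^L = 1, let D be a multiple of L, and let θ_i^j ∈ ℝ for i = 1,…,N, j = 1,…,D. For each j define the linear map E_j : (ℂ²)^{⊗N} → (ℂ²)^{⊗N} by E_j(v) := (√2)^N · (⟨+|^{⊗N} ⊗ 1) · U_T · ( (∏_{i=N,…,1} exp(iθ_i^j Z_i)) v ⊗ |+⟩^{⊗N} ), i.e. one unit cell of Algorithm 1 with all measurement outcomes equal to |+⟩. Then E_D ∘ ⋯ ∘ E_1 = ∏_{j=D,…,1} ∏_{i=N,…,1} exp( iθ_i^j · T^{e(j)} Z_i (T^{e(j)})† ), where e(j) := (L - (j mod L) + 1) mod L and products are ordered so that the factor with the smallest index acts first (rightmost). -/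

import Mathlib

open Matrix Complex
open scoped Kronecker Classical

noncomputable section

namespace QCA

/-- Computational-basis index set of an `N`-qubit register. -/
abbrev QIdx (N : ℕ) := Fin N → Fin 2

/-- Operators (matrices) on an `N`-qubit register `(ℂ²)^{⊗N}`. -/
abbrev MatQ (N : ℕ) := Matrix (QIdx N) (QIdx N) ℂ

/-- Pauli X. -/
def Xg : Matrix (Fin 2) (Fin 2) ℂ := !![0, 1; 1, 0]

/-- Pauli Z. -/
def Zg : Matrix (Fin 2) (Fin 2) ℂ := !![1, 0; 0, -1]

/-- Pauli Y = i·X·Z. -/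
def Yg : Matrix (Fin 2) (Fin 2) ℂ := Complex.I • (Xg * Zg)

/-- Hadamard gate. -/
def Hg : Matrix (Fin 2) (Fin 2) ℂ := (Real.sqrt 2 : ℂ)⁻¹ • !![1, 1; 1, -1]

/-- Phase gate S = diag(1, i). -/
def Sg : Matrix (Fin 2) (Fin 2) ℂ := !![1, 0; 0, Complex.I]

/-- √X := H·S·H. -/
def sqrtXg : Matrix (Fin 2) (Fin 2) ℂ := Hg * Sg * Hg

/-- The ket |+⟩ = (|0⟩+|1⟩)/√2. -/
def ketPlus : Fin 2 → ℂ := fun _ => (Real.sqrt 2 : ℂ)⁻¹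

/-- The bra ⟨+|. -/
def braPlus : Fin 2 → ℂ := fun a => star (ketPlus a)

/-- The product state |+⟩^{⊗ι}. -/
def ketPlusAll (ι : Type*) [Fintype ι] : (ι → Fin 2) → ℂ := fun s => ∏ i, ketPlus (s i)

/-- Kronecker product of two vectors. -/
def kronVec {a b : Type*} (v : a → ℂ) (w : b → ℂ) : a × b → ℂ := fun p => v p.1 * w p.2

variable {ι : Type*} [Fintype ι] [DecidableEq ι]

/-- `op1 P i` acts as the one-qubit operator `P` on qubit `i` and as the identity elsewhere. -/
def op1 (P : Matrix (Fin 2) (Fin 2) ℂ) (i : ι) : Matrix (ι → Fin 2) (ι → Fin 2) ℂ :=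
  fun s t => P (s i) (t i) * ∏ j ∈ Finset.univ.erase i, (if s j = t j then (1 : ℂ) else 0)

/-- Controlled-Z gate between qubits `i` and `j` (identity elsewhere). -/
def cz2 (i j : ι) : Matrix (ι → Fin 2) (ι → Fin 2) ℂ :=
  Matrix.diagonal fun s => if s i = 1 ∧ s j = 1 then (-1 : ℂ) else 1

/-- The Z-rotation exp(iθ Z_i) on qubit `i`. -/
def rotZ (θ : ℝ) (i : ι) : Matrix (ι → Fin 2) (ι → Fin 2) ℂ :=
  NormedSpace.exp (((θ : ℂ) * Complex.I) • op1 Zg i)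

/-- The layer ∏_{i=1}^{N} H_i of Hadamards on every site of a ring of `N` qubits. -/
def hadamardLayer (N : ℕ) : MatQ N := (List.ofFn fun i : Fin N => op1 Hg i).prod

/-- The layer ∏_{i=1}^{N} CZ_{i,i+1} of controlled-Z gates on a ring of `N` qubits
(site indices mod `N`; the factors pairwise commute). -/
def czRing (N : ℕ) [NeZero N] : MatQ N := (List.ofFn fun i : Fin N => cz2 i (i + 1)).prod

/-- The layer ∏_{i=1}^{N} (√X)_i on a ring of `N` qubits. -/
def sqrtXLayer (N : ℕ) : MatQ N := (List.ofFn fun i : Fin N => op1 sqrtXg i).prod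

/-- The cluster CQCA T_c = (∏ H_i)·(∏ CZ_{i,i+1}) on a ring of `N` qubits. -/
def Tc (N : ℕ) [NeZero N] : MatQ N := hadamardLayer N * czRing N

/-- The periodic CQCA T̃_c = ∏ CZ_{i,i+1} on a ring of `N` qubits. -/
def Ttc (N : ℕ) [NeZero N] : MatQ N := czRing N

/-- The fractal CQCA T̂_c = (∏ H_i)·(∏ CZ_{i,i+1})·(∏ (√X)_i) on a ring of `N` qubits. -/
def Thc (N : ℕ) [NeZero N] : MatQ N := hadamardLayer N * czRing N * sqrtXLayer N

/-- Controlled-Z between input qubit `i` and output qubit `i` on a doubled register. -/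
def czIO {N : ℕ} (i : Fin N) : Matrix (QIdx N × QIdx N) (QIdx N × QIdx N) ℂ :=
  Matrix.diagonal fun p => if p.1 i = 1 ∧ p.2 i = 1 then (-1 : ℂ) else 1

/-- The unitary U_T = (1 ⊗ T)·(∏_i H_i^{(out)})·(∏_i CZ_{i,i}^{(in,out)}) of Eq. (16). -/
def UT {N : ℕ} (T : MatQ N) : Matrix (QIdx N × QIdx N) (QIdx N × QIdx N) ℂ :=
  ((1 : MatQ N) ⊗ₖ T) *
    (List.ofFn fun i : Fin N => (1 : MatQ N) ⊗ₖ op1 Hg i).prod *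
    (List.ofFn fun i : Fin N => czIO i).prod

/-- Contraction of the input register with the product bra `⊗_i bra i`. -/
def contractIn {N : ℕ} (bra : Fin N → Fin 2 → ℂ) (v : QIdx N × QIdx N → ℂ) : QIdx N → ℂ :=
  fun t => ∑ s : QIdx N, (∏ i, bra i (s i)) * v (s, t)

lemma diagonal_commute {α : Type*} [Fintype α] [DecidableEq α] (d e : α → ℂ) :
    Commute (Matrix.diagonal d) (Matrix.diagonal e) := by
  unfold Commute SemiconjBy
  have h : (fun i => d i * e i) = fun i => e i * d i := by funext x; ring
  rw [Matrix.diagonal_mul_diagonal, Matrix.diagonal_mul_diagonal, h]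

lemma Zg_eq_diagonal : Zg = Matrix.diagonal ![1, -1] := by
  ext i j
  fin_cases i <;> fin_cases j <;> simp [Zg, Matrix.diagonal]

lemma op1_diagonal (d : Fin 2 → ℂ) (i : ι) :
    op1 (Matrix.diagonal d) i = Matrix.diagonal (fun s => d (s i)) := by
  ext s t
  by_cases h : s = t
  · subst h
    simp [op1, Matrix.diagonal_apply_eq]
  · rw [Matrix.diagonal_apply_ne _ h]
    by_cases hi : s i = t i
    · obtain ⟨k, hk⟩ : ∃ k, s k ≠ t k := Function.ne_iff.mp h
      have hki : k ≠ i := by rintro rfl; exact hk hi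
      have h0 : (if s k = t k then (1 : ℂ) else 0) = 0 := by simp [hk]
      unfold op1
      rw [Finset.prod_eq_zero (Finset.mem_erase.mpr ⟨hki, Finset.mem_univ k⟩) h0]
      ring
    · unfold op1
      rw [Matrix.diagonal_apply_ne _ hi]
      ring

/-- The controlled-Z gate attached to an (undirected) edge `e`. -/
def czEdge {N : ℕ} (e : Sym2 (Fin N)) : MatQ N :=
  Matrix.diagonal fun s => if ∀ i ∈ e, s i = 1 then (-1 : ℂ) else 1

/-- The unitary ∏_{{i,j} ∈ E(G)} CZ_{i,j} preparing the graph state (the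
factors pairwise commute, so the product over the edge set is well defined). -/
def graphUnitary {N : ℕ} (G : SimpleGraph (Fin N)) [DecidableRel G.Adj] : MatQ N :=
  G.edgeFinset.noncommProd czEdge (by intro a _ b _ _; exact diagonal_commute _ _)

/-- The graph state |G⟩ = (∏_{{i,j} ∈ E(G)} CZ_{i,j}) |+⟩^{⊗N}. -/
def graphState {N : ℕ} (G : SimpleGraph (Fin N)) [DecidableRel G.Adj] : QIdx N → ℂ :=
  (graphUnitary G).mulVec (ketPlusAll (Fin N))

/-- The stabilizer generator K_v = X_v · ∏_{w ∈ N_G(v)} Z_w of the graph state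
(the Z factors pairwise commute, so the product is well defined). -/
def stabGen {N : ℕ} (G : SimpleGraph (Fin N)) [DecidableRel G.Adj] (v : Fin N) : MatQ N :=
  op1 Xg v *
    (G.neighborFinset v).noncommProd (fun w => op1 Zg w)
      (by
        intro a _ b _ _
        simp only [Function.onFun]
        rw [Zg_eq_diagonal, op1_diagonal, op1_diagonal]
        exact diagonal_commute _ _)


/-!
Feeding `u ⊗ |+⟩^{⊗N}` through the layer of controlled-Z gates and projecting the input
register on `⟨+|^{⊗N}` leaves `2^{-N/2} H^{⊗N} u` on the output register, because the phase
`(-1)^{s·t}` of the controlled-Z layer is `√2^N` times the entry `⟨t|H^{⊗N}|s⟩`. The layer of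
Hadamards undoes this (`H² = 1`), so a unit cell acts as `T · R_j`, where `R_j` is its product
of Z-rotations. Moving every `T` to the left gives `∏_j T^{D-j} R_j T^{-(D-j)} · T^D`; here
`T^D = 1` and `T^{D-j} = T^{e(j)}` since `T^L = 1` and `L ∣ D`, and conjugating `R_j` by the
unitary `T^{e(j)}` conjugates the generators of its exponentials.
-/

def piKronecker {κ m R : Type*} [Fintype κ] [CommMonoid R] (A : κ → Matrix m m R) :
    Matrix (κ → m) (κ → m) R :=
  fun s t => ∏ i, A i (s i) (t i)

lemma piKronecker_one {κ m R : Type*} [Fintype κ] [DecidableEq m] [CommSemiring R] :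
    piKronecker (1 : κ → Matrix m m R) = 1 := by
  ext s t
  simp only [piKronecker, Pi.one_apply, Matrix.one_apply]
  rw [Finset.prod_ite_zero]
  simp [funext_iff]

lemma piKronecker_mul {κ m R : Type*} [Fintype κ] [DecidableEq κ] [Fintype m] [CommSemiring R]
    (A B : κ → Matrix m m R) : piKronecker (A * B) = piKronecker A * piKronecker B := by
  ext s t
  simp only [piKronecker, Pi.mul_apply, Matrix.mul_apply, Finset.prod_univ_sum,
    Finset.prod_mul_distrib]
  rfl

def piKroneckerHom (κ m R : Type*) [Fintype κ] [DecidableEq κ] [Fintype m] [DecidableEq m]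
    [CommSemiring R] : (κ → Matrix m m R) →* Matrix (κ → m) (κ → m) R where
  toFun := piKronecker
  map_one' := piKronecker_one
  map_mul' := piKronecker_mul

lemma list_prod_ofFn_mulSingle {N : ℕ} {M : Type*} [Monoid M] (x : Fin N → M) :
    (List.ofFn fun i => Pi.mulSingle i (x i)).prod = x := by
  convert Finset.noncommProd_mulSingle x
  rw [List.ofFn_eq_map, ← Finset.noncommProd_toFinset _ _
    (fun i _ j _ _ => Pi.mulSingle_apply_commute x i j) (List.nodup_finRange N)]
  simp only [List.toFinset_finRange]

lemma op1_eq_piKronecker (P : Matrix (Fin 2) (Fin 2) ℂ) (i : ι) :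
    op1 P i = piKronecker (Pi.mulSingle i P) := by
  ext s t
  rw [piKronecker, ← Finset.mul_prod_erase _ _ (Finset.mem_univ i), op1, Pi.mulSingle_eq_same]
  congr 1
  refine Finset.prod_congr rfl fun j hj => ?_
  rw [Pi.mulSingle_eq_of_ne (Finset.ne_of_mem_erase hj), Matrix.one_apply]

lemma list_prod_ofFn_op1 {N : ℕ} (P : Matrix (Fin 2) (Fin 2) ℂ) :
    (List.ofFn fun i : Fin N => op1 P i).prod = piKronecker fun _ => P := by
  calc (List.ofFn fun i : Fin N => op1 P i).prod
      = (List.ofFn fun i => piKroneckerHom (Fin N) (Fin 2) ℂ (Pi.mulSingle i P)).prod := by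
        simp only [op1_eq_piKronecker]; rfl
    _ = piKroneckerHom (Fin N) (Fin 2) ℂ (List.ofFn fun i => Pi.mulSingle i P).prod := by
        rw [map_list_prod, List.map_ofFn]; rfl
    _ = piKronecker fun _ => P := by rw [list_prod_ofFn_mulSingle]; rfl

lemma list_prod_map_one_kronecker {m n R : Type*} [Fintype m] [DecidableEq m] [Fintype n]
    [DecidableEq n] [CommSemiring R] (l : List (Matrix n n R)) :
    (l.map fun B => (1 : Matrix m m R) ⊗ₖ B).prod = 1 ⊗ₖ l.prod := by
  induction l with
  | nil => simp
  | cons A l ih =>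
    rw [List.map_cons, List.prod_cons, List.prod_cons, ih, ← mul_kronecker_mul, one_mul]

lemma list_prod_ofFn_diagonal {N : ℕ} {n R : Type*} [Fintype n] [DecidableEq n] [CommSemiring R]
    (d : Fin N → n → R) :
    (List.ofFn fun i => diagonal (d i)).prod = diagonal fun a => ∏ i, d i a := by
  rw [show (fun i => diagonal (d i)) = diagonalRingHom n R ∘ d from rfl, ← List.map_ofFn,
    ← map_list_prod, List.prod_ofFn, diagonalRingHom_apply]
  congr 1
  funext a
  exact Finset.prod_apply a _ d

lemma sqrt_two_ne_zero : (Real.sqrt 2 : ℂ) ≠ 0 := by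
  exact_mod_cast (Real.sqrt_pos.2 two_pos).ne'

lemma sqrt_two_pow_mul_inv_pow (N : ℕ) :
    (Real.sqrt 2 : ℂ) ^ N * ((Real.sqrt 2 : ℂ)⁻¹) ^ N = 1 := by
  rw [← mul_pow, mul_inv_cancel₀ sqrt_two_ne_zero, one_pow]

lemma sqrt_two_mul_Hg (a b : Fin 2) :
    (Real.sqrt 2 : ℂ) * Hg a b = if b = 1 ∧ a = 1 then -1 else 1 := by
  fin_cases a <;> fin_cases b <;> simp [Hg]

lemma Hg_mul_Hg : Hg * Hg = 1 := by
  have h : (Real.sqrt 2 : ℂ) * Real.sqrt 2 = 2 := by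
    exact_mod_cast Real.mul_self_sqrt zero_le_two
  ext a b
  fin_cases a <;> fin_cases b <;>
    simp [Hg, Matrix.mul_apply, Fin.sum_univ_two, ← mul_inv, h] <;> norm_num

lemma braPlus_apply (a : Fin 2) : braPlus a = (Real.sqrt 2 : ℂ)⁻¹ := by
  simp [braPlus, ketPlus]

lemma list_prod_ofFn_czIO {N : ℕ} :
    (List.ofFn fun i : Fin N => czIO i).prod =
      diagonal fun p => (Real.sqrt 2 : ℂ) ^ N * piKronecker (fun _ => Hg) p.2 p.1 := by
  simp only [czIO, list_prod_ofFn_diagonal]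
  congr
  funext p
  simp only [piKronecker, ← Fin.prod_const, ← Finset.prod_mul_distrib, sqrt_two_mul_Hg]

lemma contractIn_one_kronecker_mulVec {N : ℕ} (bra : Fin N → Fin 2 → ℂ) (A : MatQ N)
    (w : QIdx N × QIdx N → ℂ) :
    contractIn bra (((1 : MatQ N) ⊗ₖ A) *ᵥ w) = A *ᵥ contractIn bra w := by
  funext t
  simp only [contractIn, mulVec, dotProduct, Fintype.sum_prod_type, kroneckerMap_apply, one_apply,
    ite_mul, one_mul, zero_mul, Finset.sum_ite_irrel, Finset.sum_const_zero, Finset.sum_ite_eq,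
    Finset.mem_univ, if_true, Finset.mul_sum]
  rw [Finset.sum_comm]
  simp only [mul_left_comm]

lemma contractIn_braPlus_czIO_mulVec {N : ℕ} (u : QIdx N → ℂ) :
    contractIn (fun _ => braPlus)
        ((List.ofFn fun i : Fin N => czIO i).prod *ᵥ kronVec u (ketPlusAll (Fin N))) =
      ((Real.sqrt 2 : ℂ)⁻¹) ^ N • (piKronecker (fun _ => Hg) *ᵥ u) := by
  funext t
  rw [list_prod_ofFn_czIO]
  simp only [contractIn, mulVec_diagonal, kronVec, ketPlusAll, ketPlus, braPlus_apply,
    Finset.prod_const, Finset.card_univ, Fintype.card_fin, Pi.smul_apply, smul_eq_mul]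
  simp only [mulVec, dotProduct, Finset.mul_sum]
  refine Finset.sum_congr rfl fun s _ => ?_
  linear_combination (piKronecker (fun _ => Hg) t s * u s * ((Real.sqrt 2 : ℂ)⁻¹) ^ N) *
    sqrt_two_pow_mul_inv_pow N

lemma unitCell_eq {N : ℕ} (T : MatQ N) (u : QIdx N → ℂ) :
    (Real.sqrt 2 : ℂ) ^ N •
        contractIn (fun _ => braPlus) (UT T *ᵥ kronVec u (ketPlusAll (Fin N))) = T *ᵥ u := by
  have hH : (piKronecker fun _ : Fin N => Hg) * piKronecker (fun _ => Hg) = 1 := by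
    rw [← piKronecker_mul, ← piKronecker_one]
    exact congrArg piKronecker (funext fun _ => Hg_mul_Hg)
  have hlayer : (List.ofFn fun i : Fin N => (1 : MatQ N) ⊗ₖ op1 Hg i).prod =
      1 ⊗ₖ piKronecker fun _ => Hg := by
    rw [← list_prod_ofFn_op1, ← list_prod_map_one_kronecker, List.map_ofFn]
    rfl
  rw [UT, hlayer, ← mulVec_mulVec, ← mulVec_mulVec, contractIn_one_kronecker_mulVec,
    contractIn_one_kronecker_mulVec, contractIn_braPlus_czIO_mulVec, mulVec_smul, mulVec_mulVec,
    hH, one_mulVec, ← mulVec_smul, smul_smul, sqrt_two_pow_mul_inv_pow, one_smul]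

lemma foldl_ofFn_mulVec {n : Type*} [Fintype n] [DecidableEq n] :
    ∀ {D : ℕ} (M : Fin D → Matrix n n ℂ) (v : n → ℂ),
      (List.ofFn fun j w => M j *ᵥ w).foldl (fun w f => f w) v = (List.ofFn M).reverse.prod *ᵥ v
  | 0, _, v => by simp
  | D + 1, M, v => by
    rw [List.ofFn_succ, List.foldl_cons, foldl_ofFn_mulVec (fun j => M j.succ), List.ofFn_succ,
      List.reverse_cons, List.prod_append, List.prod_singleton, mulVec_mulVec]

lemma prod_reverse_ofFn_units_mul {M : Type*} [Monoid M] (u : Mˣ) :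
    ∀ {D : ℕ} (A : Fin D → M), (List.ofFn fun j => ↑u * A j).reverse.prod =
      (List.ofFn fun j : Fin D =>
        (↑(u ^ (D - j)) : M) * A j * ↑(u ^ (D - j))⁻¹).reverse.prod * ↑(u ^ D)
  | 0, _ => by simp
  | D + 1, A => by
    rw [List.ofFn_succ, List.ofFn_succ, List.reverse_cons, List.reverse_cons, List.prod_append,
      List.prod_append, prod_reverse_ofFn_units_mul u (fun j => A j.succ)]
    simp only [List.prod_cons, List.prod_nil, mul_one, Fin.val_zero, Nat.sub_zero, Fin.val_succ,
      Nat.add_sub_add_right]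
    rw [mul_assoc _ (_ * _ * _), Units.inv_mul_cancel_right, pow_succ, Units.val_mul, mul_assoc,
      mul_assoc]

lemma units_conj_list_prod {M : Type*} [Monoid M] (u : Mˣ) (l : List M) :
    (u : M) * l.prod * ↑u⁻¹ = (l.map fun A => (u : M) * A * ↑u⁻¹).prod := by
  induction l with
  | nil => simp
  | cons A l ih =>
    rw [List.map_cons, List.prod_cons, List.prod_cons, ← ih]
    simp [mul_assoc]

lemma units_conj_prod_rotZ {N : ℕ} (U : (MatQ N)ˣ) (θ : Fin N → ℝ) :
    (U : MatQ N) * (List.ofFn fun i => rotZ (θ i) i).reverse.prod * ↑U⁻¹ =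
      (List.ofFn fun i => NormedSpace.exp (((θ i : ℂ) * Complex.I) •
        ((U : MatQ N) * op1 Zg i * ↑U⁻¹))).reverse.prod := by
  rw [units_conj_list_prod, List.map_reverse, List.map_ofFn]
  congr 2
  refine congrArg List.ofFn (funext fun i => ?_)
  simp only [Function.comp_apply, rotZ, ← Matrix.exp_units_conj, Matrix.mul_smul, Matrix.smul_mul]

lemma sub_mod_eq_of_dvd_of_lt {L D j : ℕ} (hD : L ∣ D) (hj : j < D) :
    (D - j) % L = (L - (j + 1) % L + 1) % L := by
  have hL : 0 < L := Nat.pos_of_dvd_of_pos hD (by omega)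
  rw [← ZMod.natCast_eq_natCast_iff']
  push_cast [Nat.cast_sub hj.le, Nat.cast_sub (Nat.mod_lt _ hL).le, ZMod.natCast_mod,
    (ZMod.natCast_eq_zero_iff D L).mpr hD, ZMod.natCast_self]
  ring

/-- `j : Fin D` stands for the paper's index `j + 1 ∈ {1,…,D}`; in the products and in the
composition the factor with the smallest index acts first. -/
theorem mbqc_by_unit_cells_general {N L D : ℕ} (T : MatQ N)
    (hT : T ∈ Matrix.unitaryGroup (QIdx N) ℂ) (hTL : T ^ L = 1) (hD : L ∣ D)
    (θ : Fin D → Fin N → ℝ) (v : QIdx N → ℂ) :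
    (List.ofFn fun j : Fin D => fun w : QIdx N → ℂ =>
        ((Real.sqrt 2 : ℂ) ^ N) •
          contractIn (fun _ => braPlus)
            ((UT T).mulVec (kronVec
              (((List.ofFn fun i : Fin N => rotZ (θ j i) i).reverse.prod).mulVec w)
              (ketPlusAll (Fin N))))).foldl (fun w f => f w) v =
      ((List.ofFn fun j : Fin D =>
        (List.ofFn fun i : Fin N =>
          NormedSpace.exp (((θ j i : ℂ) * Complex.I) •
            (T ^ ((L - (((j : ℕ) + 1) % L) + 1) % L) * op1 Zg i *
              (T ^ ((L - (((j : ℕ) + 1) % L) + 1) % L))ᴴ))).reverse.prod).reverse.prod).mulVec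
        v := by
  obtain ⟨u, rfl, hu_inv⟩ : ∃ u : (MatQ N)ˣ, ↑u = T ∧ ↑u⁻¹ = Tᴴ :=
    ⟨Unitary.toUnits ⟨T, hT⟩, rfl, rfl⟩
  have huL : u ^ L = 1 := Units.ext (by rw [Units.val_pow_eq_pow_val, hTL, Units.val_one])
  have huD : u ^ D = 1 := by
    obtain ⟨k, rfl⟩ := hD
    rw [pow_mul, huL, one_pow]
  simp_rw [unitCell_eq, mulVec_mulVec]
  rw [foldl_ofFn_mulVec, prod_reverse_ofFn_units_mul, huD, Units.val_one, mul_one]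
  refine congrArg (fun l => List.prod (List.reverse l) *ᵥ v)
    (congrArg List.ofFn (funext fun j => ?_))
  rw [pow_eq_pow_mod _ huL, sub_mod_eq_of_dvd_of_lt hD j.isLt, units_conj_prod_rotZ, ← inv_pow,
    Units.val_pow_eq_pow_val, Units.val_pow_eq_pow_val, hu_inv, conjTranspose_pow]

/-- Theorem 2: the composition `E_D ∘ ⋯ ∘ E_1` of the unit cells of
Algorithm 1 (all outcomes |+⟩) equals
`∏_{j=D,…,1} ∏_{i=N,…,1} exp(iθ_i^j · T^{e(j)} Z_i (T^{e(j)})†)` with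
`e(j) = (L - (j mod L) + 1) mod L`. Here `j : Fin D` stands for the mathematical index
`j+1 ∈ {1,…,D}`; products/compositions with the smallest index act first. -/
theorem mbqc_by_unit_cells {N L D : ℕ} (hL : 1 ≤ L) (T : MatQ N)
    (hT : T ∈ Matrix.unitaryGroup (QIdx N) ℂ) (hTL : T ^ L = 1) (hD : L ∣ D)
    (θ : Fin D → Fin N → ℝ) (v : QIdx N → ℂ) :
    (List.ofFn fun j : Fin D => fun w : QIdx N → ℂ =>
        ((Real.sqrt 2 : ℂ) ^ N) •
          contractIn (fun _ => braPlus)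
            ((UT T).mulVec (kronVec
              (((List.ofFn fun i : Fin N => rotZ (θ j i) i).reverse.prod).mulVec w)
              (ketPlusAll (Fin N))))).foldl (fun w f => f w) v =
      ((List.ofFn fun j : Fin D =>
        (List.ofFn fun i : Fin N =>
          NormedSpace.exp (((θ j i : ℂ) * Complex.I) •
            (T ^ ((L - (((j : ℕ) + 1) % L) + 1) % L) * op1 Zg i *
              (T ^ ((L - (((j : ℕ) + 1) % L) + 1) % L))ᴴ))).reverse.prod).reverse.prod).mulVec
        v :=
  mbqc_by_unit_cells_general T hT hTL hD θ v

end QCA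

end
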